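/- Let S be a decision rule system with n(S) > 0. Then h_EAR(S) ≥ ln|S^max| / ln(k(S)+1). -/

import Mathlib

/-! Formalization of decision rule systems and decision trees
(Durdymyradov & Moshkov, "Greedy Algorithm for Inference of Decision Trees
from Decision Rule Systems"). -/

/-- Values of attributes: `some δ` is a natural number value, `none` is the
special symbol `*` (interpreted as a value not occurring in the system). -/
abbrev Val := Option ℕ

/-- A decision rule `(a_{i₁}=δ₁) ∧ ⋯ ∧ (a_{iₘ}=δₘ) → σ`: the left-hand side
is a finite set of equations (attribute, value), the right-hand side a decision. -/
structure Rule where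
  lhs : Finset (ℕ × ℕ)
  rhs : ℕ
deriving DecidableEq

namespace Rule

/-- `A(r)`: the set of attributes of a rule. -/
def attrs (r : Rule) : Finset ℕ := r.lhs.image Prod.fst

/-- `K(r)`: the equation system of the left-hand side of a rule. -/
def K (r : Rule) : Finset (ℕ × Val) := r.lhs.image (fun p => (p.1, some p.2))

/-- the length of a rule -/
def len (r : Rule) : ℕ := r.lhs.card

/-- A rule is wellformed if the attributes in its left-hand side are pairwise
different, i.e. each attribute carries at most one equation. -/
def WF (r : Rule) : Prop := ∀ p ∈ r.lhs, ∀ q ∈ r.lhs, p.1 = q.1 → p = q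

end Rule

/-- `A(S)`: the set of attributes of a system of decision rules. -/
def attrsS (S : Finset Rule) : Finset ℕ := S.biUnion Rule.attrs

/-- `n(S) = |A(S)|`. -/
def nS (S : Finset Rule) : ℕ := (attrsS S).card

/-- `d(S)`: maximum length of a rule of `S`. -/
def dS (S : Finset Rule) : ℕ := S.sup Rule.len

/-- `V_S(a)`: the set of values δ such that the equation `a = δ` occurs in `S`. -/
def VS (S : Finset Rule) (a : ℕ) : Finset ℕ :=
  S.biUnion (fun r => (r.lhs.filter (fun p => p.1 = a)).image Prod.snd)

/-- `EV_S(a) = V_S(a) ∪ {*}`. -/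
def EVS (S : Finset Rule) (a : ℕ) : Finset Val := insert none ((VS S a).image some)

/-- `k(S) = max{|V_S(a)| : a ∈ A(S)}`. -/
def kS (S : Finset Rule) : ℕ := (attrsS S).sup (fun a => (VS S a).card)

/-- A (wellformed) decision rule system: a finite nonempty set of wellformed rules. -/
def SysWF (S : Finset Rule) : Prop := S.Nonempty ∧ ∀ r ∈ S, r.WF

/-- An equation system is consistent if it does not assign two different values
to the same attribute. -/
def Consistent (E : Finset (ℕ × Val)) : Prop :=
  ∀ p ∈ E, ∀ q ∈ E, p.1 = q.1 → p.2 = q.2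

instance : DecidablePred Consistent := fun E => by unfold Consistent; infer_instance

/-- `r_α`: the rule obtained from `r` by deleting from its left-hand side all
equations belonging to `α`. -/
def Rule.restrict (r : Rule) (α : Finset (ℕ × Val)) : Rule :=
  ⟨r.lhs.filter (fun p => ((p.1, (some p.2 : Val)) ∉ α)), r.rhs⟩

/-- `S_α`: the set of rules `r_α` for `r ∈ S` with `K(r) ∪ α` consistent. -/
def sysRestrict (S : Finset Rule) (α : Finset (ℕ × Val)) : Finset Rule :=
  (S.filter (fun r => Consistent (r.K ∪ α))).image (fun r => r.restrict α)

/-- Extended decision trees: terminal nodes are labeled with sets of rules, and a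
working node is labeled with an attribute and has one child for each value
(only the children corresponding to values in `EV_S(a)` are relevant). -/
inductive DT where
  | leaf (τ : Finset Rule) : DT
  | node (a : ℕ) (c : Val → DT) : DT

/-- `Γ` is an extended decision tree over `S`: working nodes are labeled with
attributes of `A(S)` (with edges labeled by the elements of `EV_S(a)`),
terminal nodes with subsets of `S`. -/
def DT.Over (S : Finset Rule) : DT → Prop
  | .leaf τ => τ ⊆ S
  | .node a c => a ∈ attrsS S ∧ ∀ v ∈ EVS S a, DT.Over S (c v)

/-- `h(Γ)`: the maximum number of working nodes in a complete path of `Γ`. -/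
def DT.depth (S : Finset Rule) : DT → ℕ
  | .leaf _ => 0
  | .node a c => 1 + (EVS S a).sup (fun v => DT.depth S (c v))

/-- The number of terminal nodes of `Γ`. -/
def DT.numLeaves (S : Finset Rule) : DT → ℕ
  | .leaf _ => 1
  | .node a c => ∑ v ∈ EVS S a, DT.numLeaves S (c v)

/-- `Γ` solves `EAR(S)` starting from the already accumulated equation system `E`:
for every complete path `ξ` with consistent `K(ξ)`, every rule of the terminal
label `τ(ξ)` satisfies `K(r) ⊆ K(ξ)`, and every other rule of `S` has
`K(r) ∪ K(ξ)` inconsistent. -/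
def DT.SolvesFrom (S : Finset Rule) : DT → Finset (ℕ × Val) → Prop
  | .leaf τ, E => Consistent E →
      (∀ r ∈ τ, r.K ⊆ E) ∧ ∀ r ∈ S, r ∉ τ → ¬ Consistent (r.K ∪ E)
  | .node a c, E => ∀ v ∈ EVS S a, DT.SolvesFrom S (c v) (insert (a, v) E)

/-- `Γ` is a decision tree over `S` solving the problem `EAR(S)`. -/
def DT.SolvesEAR (S : Finset Rule) (Γ : DT) : Prop := Γ.Over S ∧ Γ.SolvesFrom S ∅

/-- `h_EAR(S)`: the minimum depth of a decision tree over `S` solving `EAR(S)`. -/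
noncomputable def hEAR (S : Finset Rule) : ℕ :=
  sInf {n | ∃ Γ : DT, DT.SolvesEAR S Γ ∧ DT.depth S Γ = n}

/-- A node cover of the hypergraph `G(S)`. -/
def IsNodeCover (S : Finset Rule) (B : Finset ℕ) : Prop :=
  B ⊆ attrsS S ∧ ∀ r ∈ S, r.attrs.Nonempty → (r.attrs ∩ B).Nonempty

/-- `β(S)`: the minimum cardinality of a node cover of `G(S)`. -/
noncomputable def betaS (S : Finset Rule) : ℕ :=
  sInf {k | ∃ B : Finset ℕ, IsNodeCover S B ∧ B.card = k}

/-- `M` is a possible choice of `S^max`: a set of rules of `S` of length `d(S)`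
containing exactly one representative from each equivalence class
(`r₁ ∼ r₂ iff K(r₁) = K(r₂)`) of the set of rules of length `d(S)`, and
no other rules. -/
def IsMaxSet (S M : Finset Rule) : Prop :=
  (∀ r ∈ M, r ∈ S ∧ r.len = dS S) ∧
  (∀ r ∈ S, r.len = dS S → ∃ r' ∈ M, r'.K = r.K) ∧
  (∀ r₁ ∈ M, ∀ r₂ ∈ M, r₁.K = r₂.K → r₁ = r₂)

/-- `δ̄ ∈ EV(S)`, a tuple represented as a function on attributes. -/
def InEV (S : Finset Rule) (f : ℕ → Val) : Prop := ∀ a ∈ attrsS S, f a ∈ EVS S a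

/-- `K(S, δ̄)`. -/
def KofTuple (S : Finset Rule) (f : ℕ → Val) : Finset (ℕ × Val) :=
  (attrsS S).image (fun a => (a, f a))

/-- The rule `r` is realizable for the tuple `δ̄`, i.e. `K(r) ⊆ K(S, δ̄)`. -/
def Realizable (S : Finset Rule) (f : ℕ → Val) (r : Rule) : Prop :=
  r.K ⊆ KofTuple S f

instance (S : Finset Rule) (f : ℕ → Val) : DecidablePred (Realizable S f) :=
  fun r => by unfold Realizable; infer_instance

/-! A rule `r ∈ S` determines the tuple `δ̄_r` that agrees with `r` on `A(r)` and is `*`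
elsewhere. Following `δ̄_r` through a tree solving `EAR(S)` ends in a complete path `ξ` whose
equations hold for `δ̄_r`; then `K(r) ∪ K(ξ)` is consistent, so `r ∈ τ(ξ)` and `K(r) ⊆ K(ξ)`.
Since the equations of `ξ` hold for `δ̄_r`, they pin down `K(r)`: two rules of `S^max` with
the same path have the same `K`, hence coincide. A tree of depth `h` over `S` has at most
`(k(S) + 1)^h` complete paths, so `|S^max| ≤ (k(S) + 1)^{h_EAR(S)}`. -/

def SatisfiedBy (E : Finset (ℕ × Val)) (f : ℕ → Val) : Prop := ∀ p ∈ E, p.2 = f p.1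

namespace SatisfiedBy

variable {E E' : Finset (ℕ × Val)} {f : ℕ → Val}

theorem consistent (h : SatisfiedBy E f) : Consistent E := by
  intro p hp q hq hpq
  rw [h p hp, h q hq, hpq]

theorem union (h : SatisfiedBy E f) (h' : SatisfiedBy E' f) : SatisfiedBy (E ∪ E') f := by
  intro p hp
  rcases Finset.mem_union.mp hp with hp | hp
  exacts [h p hp, h' p hp]

theorem mono (h : SatisfiedBy E' f) (hE : E ⊆ E') : SatisfiedBy E f :=
  fun p hp => h p (hE hp)

end SatisfiedBy

namespace Rule

variable {r : Rule} {a δ : ℕ}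

theorem mem_K_some : (a, (some δ : Val)) ∈ r.K ↔ (a, δ) ∈ r.lhs := by
  simp [K]

theorem mem_attrs_of_mem_lhs (h : (a, δ) ∈ r.lhs) : a ∈ r.attrs :=
  Finset.mem_image.mpr ⟨(a, δ), h, rfl⟩

open Classical in
noncomputable def tuple (r : Rule) (a : ℕ) : Val :=
  if h : ∃ δ, (a, δ) ∈ r.lhs then some h.choose else none

theorem mem_lhs_of_tuple_eq_some (h : r.tuple a = some δ) : (a, δ) ∈ r.lhs := by
  unfold tuple at h
  split_ifs at h with hex
  exact Option.some.inj h ▸ hex.choose_spec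

theorem tuple_eq_some (hr : r.WF) (h : (a, δ) ∈ r.lhs) : r.tuple a = some δ := by
  have hex : ∃ δ, (a, δ) ∈ r.lhs := ⟨δ, h⟩
  rw [tuple, dif_pos hex]
  exact congrArg some (Prod.ext_iff.mp (hr _ hex.choose_spec _ h rfl)).2

theorem satisfiedBy_K_tuple (hr : r.WF) : SatisfiedBy r.K r.tuple := by
  intro p hp
  obtain ⟨x, hx, rfl⟩ := Finset.mem_image.mp hp
  exact (tuple_eq_some hr hx).symm

theorem K_subset_K_of_satisfiedBy_tuple {s : Rule} (h : SatisfiedBy r.K s.tuple) :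
    r.K ⊆ s.K := by
  intro p hp
  obtain ⟨x, hx, rfl⟩ := Finset.mem_image.mp hp
  exact mem_K_some.mpr (mem_lhs_of_tuple_eq_some (h _ hp).symm)

theorem inEV_tuple {S : Finset Rule} (hr : r ∈ S) : InEV S r.tuple := by
  intro a _
  cases h : r.tuple a with
  | none => simp [EVS]
  | some δ =>
    refine Finset.mem_insert_of_mem (Finset.mem_image_of_mem some ?_)
    exact Finset.mem_biUnion.mpr ⟨r, hr, Finset.mem_image.mpr
      ⟨(a, δ), Finset.mem_filter.mpr ⟨mem_lhs_of_tuple_eq_some h, rfl⟩, rfl⟩⟩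

end Rule

theorem card_EVS_le {S : Finset Rule} {a : ℕ} (ha : a ∈ attrsS S) :
    (EVS S a).card ≤ kS S + 1 :=
  calc (EVS S a).card ≤ ((VS S a).image some).card + 1 := Finset.card_insert_le _ _
    _ ≤ (VS S a).card + 1 := Nat.add_le_add_right Finset.card_image_le 1
    _ ≤ kS S + 1 := Nat.add_le_add_right (Finset.le_sup (f := fun a => (VS S a).card) ha) 1

namespace DT

variable {S : Finset Rule}

/-- The equation system `K(ξ)` and the label `τ(ξ)` of the complete path `ξ` followed by the
tuple `f`, starting from the accumulated equation system `E`. -/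
def run : DT → (ℕ → Val) → Finset (ℕ × Val) → Finset (ℕ × Val) × Finset Rule
  | .leaf τ, _, E => (E, τ)
  | .node a c, f, E => run (c (f a)) f (insert (a, f a) E)

/-- The equation systems `K(ξ)` of all complete paths `ξ`, starting from `E`. -/
def pathSystems (S : Finset Rule) : DT → Finset (ℕ × Val) → Finset (Finset (ℕ × Val))
  | .leaf _, E => {E}
  | .node a c, E => (EVS S a).biUnion fun v => pathSystems S (c v) (insert (a, v) E)

theorem card_pathSystems_le {Γ : DT} (hΓ : Γ.Over S) (E : Finset (ℕ × Val)) :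
    (Γ.pathSystems S E).card ≤ (kS S + 1) ^ Γ.depth S := by
  induction Γ generalizing E with
  | leaf τ => simp [pathSystems, depth]
  | node a c ih =>
    set h := (EVS S a).sup fun v => (c v).depth S
    calc ((EVS S a).biUnion fun v => (c v).pathSystems S (insert (a, v) E)).card
        ≤ ∑ v ∈ EVS S a, ((c v).pathSystems S (insert (a, v) E)).card := Finset.card_biUnion_le
      _ ≤ ∑ _v ∈ EVS S a, (kS S + 1) ^ h := by
          refine Finset.sum_le_sum fun v hv => (ih v (hΓ.2 v hv) _).trans ?_
          exact Nat.pow_le_pow_right (Nat.succ_pos _)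
            (Finset.le_sup (f := fun v => (c v).depth S) hv)
      _ = (EVS S a).card * (kS S + 1) ^ h := by rw [Finset.sum_const, smul_eq_mul]
      _ ≤ (kS S + 1) * (kS S + 1) ^ h := Nat.mul_le_mul_right _ (card_EVS_le hΓ.1)
      _ = (kS S + 1) ^ (1 + h) := by rw [pow_add, pow_one]

variable {f : ℕ → Val}

theorem run_fst_mem_pathSystems (hf : InEV S f) {Γ : DT} (hΓ : Γ.Over S)
    (E : Finset (ℕ × Val)) : (Γ.run f E).1 ∈ Γ.pathSystems S E := by
  induction Γ generalizing E with
  | leaf τ => simp [run, pathSystems]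
  | node a c ih =>
    exact Finset.mem_biUnion.mpr ⟨f a, hf a hΓ.1, ih (f a) (hΓ.2 _ (hf a hΓ.1)) _⟩

theorem satisfiedBy_run_fst {E : Finset (ℕ × Val)} (hE : SatisfiedBy E f) (Γ : DT) :
    SatisfiedBy (Γ.run f E).1 f := by
  induction Γ generalizing E with
  | leaf τ => exact hE
  | node a c ih =>
    refine ih (f a) fun p hp => ?_
    rcases Finset.mem_insert.mp hp with rfl | hp
    exacts [rfl, hE p hp]

theorem SolvesFrom.run (hf : InEV S f) {Γ : DT} (hΓ : Γ.Over S) {E : Finset (ℕ × Val)}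
    (hs : Γ.SolvesFrom S E) : (leaf (Γ.run f E).2).SolvesFrom S (Γ.run f E).1 := by
  induction Γ generalizing E with
  | leaf τ => exact hs
  | node a c ih => exact ih (f a) (hΓ.2 _ (hf a hΓ.1)) (hs _ (hf a hΓ.1))

theorem SolvesEAR.K_subset_run {Γ : DT} (hΓ : Γ.SolvesEAR S) (hf : InEV S f) {r : Rule}
    (hr : r ∈ S) (hrf : SatisfiedBy r.K f) : r.K ⊆ (Γ.run f ∅).1 := by
  have hξ : SatisfiedBy (Γ.run f ∅).1 f := satisfiedBy_run_fst (by simp [SatisfiedBy]) Γ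
  obtain ⟨hτ, hnot⟩ := SolvesFrom.run hf hΓ.1 hΓ.2 hξ.consistent
  by_contra hsub
  exact hnot r hr (fun hmem => hsub (hτ r hmem)) (hrf.union hξ).consistent

theorem SolvesEAR.card_le_pow_depth {Γ : DT} (hΓ : Γ.SolvesEAR S) (hS : ∀ r ∈ S, r.WF)
    {M : Finset Rule} (hMS : M ⊆ S) (hM : Set.InjOn Rule.K M) :
    M.card ≤ (kS S + 1) ^ Γ.depth S := by
  have hK : ∀ r ∈ M, r.K ⊆ (Γ.run r.tuple ∅).1 := fun r hr =>
    hΓ.K_subset_run (Rule.inEV_tuple (hMS hr)) (hMS hr)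
      (Rule.satisfiedBy_K_tuple (hS r (hMS hr)))
  have hsep : ∀ r ∈ M, ∀ s ∈ M, (Γ.run r.tuple ∅).1 = (Γ.run s.tuple ∅).1 → r.K ⊆ s.K :=
    fun r hr s _ heq => Rule.K_subset_K_of_satisfiedBy_tuple <|
      (satisfiedBy_run_fst (by simp [SatisfiedBy]) Γ).mono (heq ▸ hK r hr)
  calc M.card ≤ (Γ.pathSystems S ∅).card :=
        Finset.card_le_card_of_injOn (fun r => (Γ.run r.tuple ∅).1)
          (fun r hr => run_fst_mem_pathSystems (Rule.inEV_tuple (hMS hr)) hΓ.1 ∅)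
          fun r hr s hs heq => hM hr hs ((hsep r hr s hs heq).antisymm (hsep s hs r hr heq.symm))
    _ ≤ (kS S + 1) ^ Γ.depth S := card_pathSystems_le hΓ.1 ∅

end DT

/-- Since `sInf ∅ = 0`, the bound needs a tree attaining `hEAR S`; this one shows that trees
solving `EAR(S)` exist. -/
def fullTree (S : Finset Rule) : List ℕ → Finset (ℕ × Val) → DT
  | [], E => .leaf (S.filter fun r => r.K ⊆ E)
  | a :: l, E => .node a fun v => fullTree S l (insert (a, v) E)

theorem fullTree_over {S : Finset Rule} {l : List ℕ} (hl : ∀ a ∈ l, a ∈ attrsS S)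
    (E : Finset (ℕ × Val)) : (fullTree S l E).Over S := by
  induction l generalizing E with
  | nil => exact Finset.filter_subset _ _
  | cons a l ih =>
    exact ⟨hl a List.mem_cons_self,
      fun v _ => ih (fun b hb => hl b (List.mem_cons_of_mem a hb)) _⟩

theorem not_consistent_union_of_not_subset {S : Finset Rule} {E : Finset (ℕ × Val)}
    (hE : ∀ a ∈ attrsS S, ∃ v, (a, v) ∈ E) {r : Rule} (hr : r ∈ S) (hsub : ¬ r.K ⊆ E) :
    ¬ Consistent (r.K ∪ E) := by
  intro hcons
  obtain ⟨p, hp, hpE⟩ := Finset.not_subset.mp hsub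
  obtain ⟨x, hx, rfl⟩ := Finset.mem_image.mp hp
  obtain ⟨v, hv⟩ := hE x.1 (Finset.mem_biUnion.mpr ⟨r, hr, Rule.mem_attrs_of_mem_lhs hx⟩)
  have hval : some x.2 = v :=
    hcons _ (Finset.mem_union_left _ hp) _ (Finset.mem_union_right _ hv) rfl
  exact hpE (hval ▸ hv)

theorem fullTree_solvesFrom {S : Finset Rule} (l : List ℕ) {E : Finset (ℕ × Val)}
    (hE : ∀ a ∈ attrsS S, a ∈ l ∨ ∃ v, (a, v) ∈ E) : (fullTree S l E).SolvesFrom S E := by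
  induction l generalizing E with
  | nil =>
    refine fun _ => ⟨fun r hr => (Finset.mem_filter.mp hr).2, fun r hr hrτ => ?_⟩
    exact not_consistent_union_of_not_subset (fun a ha => (hE a ha).resolve_left
      List.not_mem_nil) hr fun hsub => hrτ (Finset.mem_filter.mpr ⟨hr, hsub⟩)
  | cons a l ih =>
    refine fun v _ => ih fun b hb => ?_
    rcases hE b hb with hbl | ⟨w, hw⟩
    · rcases List.mem_cons.mp hbl with rfl | hbl
      · exact Or.inr ⟨v, Finset.mem_insert_self _ _⟩
      · exact Or.inl hbl
    · exact Or.inr ⟨w, Finset.mem_insert_of_mem hw⟩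

theorem exists_solvesEAR_depth_eq_hEAR (S : Finset Rule) :
    ∃ Γ : DT, Γ.SolvesEAR S ∧ Γ.depth S = hEAR S :=
  Nat.sInf_mem (s := {n | ∃ Γ : DT, Γ.SolvesEAR S ∧ Γ.depth S = n})
    ⟨_, fullTree S (attrsS S).toList ∅,
    ⟨fullTree_over (fun _ ha => Finset.mem_toList.mp ha) ∅,
      fullTree_solvesFrom _ fun _ ha => Or.inl (Finset.mem_toList.mpr ha)⟩, rfl⟩

theorem hEAR_ge_log_card_SMax_general (S : Finset Rule) (hS : SysWF S)
    (M : Finset Rule) (hM : IsMaxSet S M) :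
    (hEAR S : ℝ) ≥ Real.log M.card / Real.log (kS S + 1) := by
  obtain ⟨Γ, hΓ, hdepth⟩ := exists_solvesEAR_depth_eq_hEAR S
  have hcard : M.card ≤ (kS S + 1) ^ hEAR S :=
    hdepth ▸ hΓ.card_le_pow_depth hS.2 (fun r hr => (hM.1 r hr).1)
      fun r₁ h₁ r₂ h₂ => hM.2.2 r₁ h₁ r₂ h₂
  have hlog_base : 0 ≤ Real.log (kS S + 1) :=
    Real.log_nonneg (by linarith [(kS S).cast_nonneg (α := ℝ)])
  refine div_le_of_le_mul₀ hlog_base (Nat.cast_nonneg _) ?_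
  rcases M.eq_empty_or_nonempty with rfl | hne
  · simpa using mul_nonneg (Nat.cast_nonneg (hEAR S)) hlog_base
  calc Real.log M.card ≤ Real.log (((kS S + 1) ^ hEAR S : ℕ) : ℝ) :=
        Real.log_le_log (by exact_mod_cast hne.card_pos) (by exact_mod_cast hcard)
    _ = hEAR S * Real.log (kS S + 1) := by push_cast; rw [Real.log_pow]

/-- Lemma 4: Let `S` be a decision rule system with `n(S) > 0`. Then
`h_EAR(S) ≥ ln |S^max| / ln (k(S) + 1)`. -/
theorem hEAR_ge_log_card_SMax (S : Finset Rule) (hS : SysWF S) (hn : 0 < nS S)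
    (M : Finset Rule) (hM : IsMaxSet S M) :
    (hEAR S : ℝ) ≥ Real.log M.card / Real.log (kS S + 1) :=
  hEAR_ge_log_card_SMax_general S hS M hM
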